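/- Let M be a module of a graph G, and let v be a vertex outside M that is connected (by a path in G) to some vertex of M. Then the distance dist_G(v,m) is the same for all vertices m in M. -/
import Mathlib


/-- `M` is a module of `G`: every vertex outside `M` is adjacent to all of `M` or to none. -/
def SimpleGraph.IsModule {V : Type*} (G : SimpleGraph V) (M : Set V) : Prop :=
  ∀ v ∉ M, (∀ m ∈ M, G.Adj v m) ∨ (∀ m ∈ M, ¬ G.Adj v m)

/-- From any walk from a vertex outside `M` to a vertex of `M`, extract a shorter walk to a
vertex outside `M` adjacent to some member of `M`. -/
private lemma module_aux {V : Type*} {G : SimpleGraph V} {M : Set V} {v m : V}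
    (W : G.Walk v m) : v ∉ M → m ∈ M →
    ∃ u m', u ∉ M ∧ m' ∈ M ∧ G.Adj u m' ∧ ∃ P : G.Walk v u, P.length + 1 ≤ W.length := by
  induction W with
  | nil => intro hv hm; exact absurd hm hv
  | @cons a b c h W ih =>
    intro hv hm
    by_cases hb : b ∈ M
    · exact ⟨a, b, hv, hb, h, SimpleGraph.Walk.nil, by simp⟩
    · obtain ⟨u, m', hu, hm', hadj, P, hP⟩ := ih hb hm
      exact ⟨u, m', hu, hm', hadj, SimpleGraph.Walk.cons h P, by
        simp only [SimpleGraph.Walk.length_cons]; omega⟩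

theorem module_equidistant {V : Type*} (G : SimpleGraph V) (M : Set V)
    (hM : G.IsModule M) (v : V) (hv : v ∉ M) (hreach : ∃ m ∈ M, G.Reachable v m) :
    ∀ m₁ ∈ M, ∀ m₂ ∈ M, G.dist v m₁ = G.dist v m₂ := by
  -- v is reachable to every vertex of M
  have hreachall : ∀ m ∈ M, G.Reachable v m := by
    obtain ⟨m₀, hm₀, hr⟩ := hreach
    obtain ⟨W⟩ := hr
    obtain ⟨u, m', hu, hm', hadj, P, _⟩ := module_aux W hv hm₀
    intro m hm
    have hall : ∀ m ∈ M, G.Adj u m := by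
      rcases hM u hu with h | h
      · exact h
      · exact absurd hadj (h m' hm')
    exact ⟨P.concat (hall m hm)⟩
  -- key: dist v m₁ ≤ dist v m₂ for all m₁, m₂ ∈ M
  have key : ∀ m₁ ∈ M, ∀ m₂ ∈ M, G.dist v m₁ ≤ G.dist v m₂ := by
    intro m₁ hm₁ m₂ hm₂
    obtain ⟨W, hW⟩ := (hreachall m₂ hm₂).exists_walk_length_eq_dist
    obtain ⟨u, m', hu, hm', hadj, P, hP⟩ := module_aux W hv hm₂
    have hall : ∀ m ∈ M, G.Adj u m := by
      rcases hM u hu with h | h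
      · exact h
      · exact absurd hadj (h m' hm')
    have := SimpleGraph.dist_le (P.concat (hall m₁ hm₁))
    rw [SimpleGraph.Walk.length_concat] at this
    omega
  exact fun m₁ hm₁ m₂ hm₂ => le_antisymm (key m₁ hm₁ m₂ hm₂) (key m₂ hm₂ m₁ hm₁)
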